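/- arXiv:2107.03153 — 6 statements merged into one kernel-verified Lean document; each statement's English description precedes it below -/
import Mathlib

section
/- Lemma (Angles, Lemma 2.6): Let p, x, y, z be points of ℝ³ with x, y, z all distinct from p, regarded as determining three rays emanating from p. Then the unoriented angles between these rays satisfy the triangle inequality: ∠xpy ≤ ∠xpz + ∠zpy. -/
open EuclideanGeometry

theorem angle_triangle_inequality_general
    (p x y z : EuclideanSpace ℝ (Fin 3)) :
    EuclideanGeometry.angle x p y ≤
      EuclideanGeometry.angle x p z + EuclideanGeometry.angle z p y :=
  angle_le_angle_add_angle p x z y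

/-- Lemma (Angles): three rays from a point `p` in ℝ³ satisfy the triangle
inequality for unoriented angles. -/
theorem angle_triangle_inequality
    (p x y z : EuclideanSpace ℝ (Fin 3))
    (hx : x ≠ p) (hy : y ≠ p) (hz : z ≠ p) :
    EuclideanGeometry.angle x p y ≤
      EuclideanGeometry.angle x p z + EuclideanGeometry.angle z p y :=
  angle_triangle_inequality_general p x y z
end

section
/- Strict angle triangle inequality for non-coplanar rays (used in Chapter 8 to show that the lateral angle of a pyramid at a base vertex strictly exceeds the base angle when the apex lies off the base plane): Let p, x, y, z be points of ℝ³ with x, y, z distinct from p. If the vectors x − p and y − p are linearly independent and z − p does not lie in the 2-dimensional linear span of x − p and y − p, then ∠xpy < ∠xpz + ∠zpy. -/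
open scoped Real NNReal

namespace InnerProductGeometry

variable {V : Type*} [NormedAddCommGroup V] [InnerProductSpace ℝ V]

theorem angle_ne_pi_of_linearIndependent {x y : V} (h : LinearIndependent ℝ ![x, y]) :
    angle x y ≠ π := by
  rw [Ne, angle_eq_pi_iff]
  rintro ⟨-, r, -, rfl⟩
  have := (LinearIndependent.pair_iff.1 h r (-1) (by simp)).2
  norm_num at this

theorem angle_lt_angle_add_angle_of_notMem_span {x y z : V} (hxz : LinearIndependent ℝ ![x, z])
    (hy : y ∉ Submodule.span ℝ {x, z}) : angle x z < angle x y + angle y z := by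
  refine (angle_le_angle_add_angle x y z).lt_of_ne fun h => ?_
  have hy0 : y ≠ 0 := fun h0 => hy (h0 ▸ Submodule.zero_mem _)
  rcases (angle_eq_angle_add_angle_iff hy0).1 h with hπ | hmem
  · exact angle_ne_pi_of_linearIndependent hxz hπ
  · exact hy (Submodule.span_le_restrictScalars ℝ≥0 ℝ _ hmem)

end InnerProductGeometry

theorem angle_triangle_inequality_strict_general
    (p x y z : EuclideanSpace ℝ (Fin 3))
    (hxy : LinearIndependent ℝ ![x - p, y - p])
    (hspan : z - p ∉ Submodule.span ℝ ({x - p, y - p} : Set (EuclideanSpace ℝ (Fin 3)))) :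
    EuclideanGeometry.angle x p y <
      EuclideanGeometry.angle x p z + EuclideanGeometry.angle z p y :=
  InnerProductGeometry.angle_lt_angle_add_angle_of_notMem_span hxy hspan

/-- Strict angle triangle inequality for non-coplanar rays: if `x - p` and `y - p`
are linearly independent and `z - p` does not lie in their span, then
`∠ x p y < ∠ x p z + ∠ z p y`. -/
theorem angle_triangle_inequality_strict
    (p x y z : EuclideanSpace ℝ (Fin 3))
    (hx : x ≠ p) (hy : y ≠ p) (hz : z ≠ p)
    (hxy : LinearIndependent ℝ ![x - p, y - p])
    (hspan : z - p ∉ Submodule.span ℝ ({x - p, y - p} : Set (EuclideanSpace ℝ (Fin 3)))) :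
    EuclideanGeometry.angle x p y <
      EuclideanGeometry.angle x p z + EuclideanGeometry.angle z p y :=
  angle_triangle_inequality_strict_general p x y z hxy hspan
end

section
/- Lemma (Altitude, Lemma 8.2): Let Π be a plane (2-dimensional affine subspace) in ℝ³, let a ≠ b be points of Π, and let c be a point not in Π. Let c̄ be the orthogonal projection of c onto Π, and let cʳ be any point of Π with dist(a, cʳ) = dist(a, c) and dist(b, cʳ) = dist(b, c) (the triangle abc rotated into Π about the line ab). Then c, c̄, and cʳ all have the same orthogonal projection q onto the line through a and b; equivalently, c̄ and cʳ both lie on the line in Π through the foot q of the altitude of triangle abc, perpendicular to the line ab. -/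
/-!
Since the line `ab` lies in `Pl`, projecting onto `Pl` first does not change the foot on `ab`.
The points `c` and `cʳ` are both equidistant from `a` and from `b`, so `cʳ -ᵥ c` lies in the
direction of the perpendicular bisector of `ab`, i.e. is orthogonal to the line `ab`.
-/

open EuclideanGeometry

theorem orthogonalProjection_affineSpan_pair_eq_of_dist_eq
    {V P : Type*} [NormedAddCommGroup V] [InnerProductSpace ℝ V] [MetricSpace P]
    [NormedAddTorsor V P] {a b p q : P}
    (ha : dist a p = dist a q) (hb : dist b p = dist b q) :
    orthogonalProjection line[ℝ, a, b] p = orthogonalProjection line[ℝ, a, b] q := by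
  rw [orthogonalProjection_eq_orthogonalProjection_iff_vsub_mem, direction_affineSpan,
    vectorSpan_pair_rev, Submodule.mem_orthogonal_singleton_iff_inner_right]
  exact inner_vsub_vsub_of_dist_eq_of_dist_eq (by rw [dist_comm q, dist_comm p, ha])
    (by rw [dist_comm q, dist_comm p, hb])

theorem altitude_lemma_general
    (Pl : AffineSubspace ℝ (EuclideanSpace ℝ (Fin 3))) [Nonempty Pl]
    (a b c cr : EuclideanSpace ℝ (Fin 3))
    (ha : a ∈ Pl) (hb : b ∈ Pl)
    (hra : dist a cr = dist a c) (hrb : dist b cr = dist b c) :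
    orthogonalProjection (affineSpan ℝ {a, b}) c =
        orthogonalProjection (affineSpan ℝ {a, b})
          ((orthogonalProjection Pl c : EuclideanSpace ℝ (Fin 3))) ∧
      orthogonalProjection (affineSpan ℝ {a, b}) cr =
        orthogonalProjection (affineSpan ℝ {a, b})
          ((orthogonalProjection Pl c : EuclideanSpace ℝ (Fin 3))) := by
  rw [orthogonalProjection_orthogonalProjection_of_le (affineSpan_pair_le_of_mem_of_mem ha hb)]
  exact ⟨rfl, orthogonalProjection_affineSpan_pair_eq_of_dist_eq hra hrb⟩

/-- Lemma (Altitude): let `Pl` be a plane in ℝ³ containing `a ≠ b`, let `c ∉ Pl`,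
let `c̄` be the orthogonal projection of `c` onto `Pl`, and let `cʳ ∈ Pl` satisfy
`dist a cʳ = dist a c` and `dist b cʳ = dist b c` (the triangle `abc` rotated
into `Pl` about the line `ab`).  Then `c`, `c̄` and `cʳ` all have the same
orthogonal projection onto the line through `a` and `b`. -/
theorem altitude_lemma
    (Pl : AffineSubspace ℝ (EuclideanSpace ℝ (Fin 3))) [Nonempty Pl]
    (hPl : Module.finrank ℝ Pl.direction = 2)
    (a b c cr : EuclideanSpace ℝ (Fin 3))
    (ha : a ∈ Pl) (hb : b ∈ Pl) (hab : a ≠ b)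
    (hc : c ∉ Pl) (hcr : cr ∈ Pl)
    (hra : dist a cr = dist a c) (hrb : dist b cr = dist b c) :
    orthogonalProjection (affineSpan ℝ {a, b}) c =
        orthogonalProjection (affineSpan ℝ {a, b})
          ((orthogonalProjection Pl c : EuclideanSpace ℝ (Fin 3))) ∧
      orthogonalProjection (affineSpan ℝ {a, b}) cr =
        orthogonalProjection (affineSpan ℝ {a, b})
          ((orthogonalProjection Pl c : EuclideanSpace ℝ (Fin 3))) :=
  altitude_lemma_general Pl a b c cr ha hb hra hrb
end

section
/- Altitude-turn lemma (Lemma 8.3(b)): Let a, b, c, v be points of ℝ² with a ≠ b and b ≠ c, and suppose v lies strictly to the left of the directed line through a, b and strictly to the left of the directed line through b, c. Let f₁ and f₂ be the orthogonal projections (altitude feet) of v onto the lines through a, b and through b, c respectively. Then f₁ ≠ v and f₂ ≠ v, and the oriented angle from f₁ − v to f₂ − v equals the oriented turn angle from b − a to c − b; i.e., the angle between the two altitudes at v equals the turn angle of the chain a, b, c at b. -/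
noncomputable section

open EuclideanGeometry

/-- The standard orientation of the Euclidean plane `EuclideanSpace ℝ (Fin 2)`. -/
def stdOrientation : Orientation ℝ (EuclideanSpace ℝ (Fin 2)) (Fin 2) :=
  (EuclideanSpace.basisFun (Fin 2) ℝ).toBasis.orientation

instance : Fact (Module.finrank ℝ (EuclideanSpace ℝ (Fin 2)) = 2) :=
  ⟨finrank_euclideanSpace_fin⟩

/-!
The altitude vector `f - v` from a point `v` on the left of a directed line is orthogonal to the
line's direction and points to its right, so it is that direction turned by `-π/2`. Hence the
rotation carrying `b - a` to `c - b` also carries `f₁ - v` to `f₂ - v`.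
-/

open Module Real RealInnerProductSpace

namespace Orientation

variable {V : Type*} [NormedAddCommGroup V] [InnerProductSpace ℝ V] [Fact (finrank ℝ V = 2)]
  (o : Orientation ℝ V (Fin 2))

theorem oangle_eq_neg_pi_div_two_of_inner_eq_zero_of_areaForm_neg {x y : V}
    (h : ⟪x, y⟫ = 0) (hxy : o.areaForm x y < 0) : o.oangle x y = (-π / 2 : ℝ) := by
  rw [oangle, neg_div, Complex.arg_eq_neg_pi_div_two_iff.mpr]
  simp [kahler_apply_apply, h, hxy]

theorem oangle_eq_oangle_of_oangle_eq_oangle {w x y z : V} (hw : w ≠ 0) (hx : x ≠ 0)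
    (hy : y ≠ 0) (hz : z ≠ 0) (h : o.oangle w x = o.oangle y z) :
    o.oangle x z = o.oangle w y := by
  rw [← o.oangle_add hx hw hz, ← o.oangle_add hw hy hz, o.oangle_rev, h]
  abel

end Orientation

namespace EuclideanGeometry

variable {V P : Type*} [NormedAddCommGroup V] [InnerProductSpace ℝ V] [MetricSpace P]
  [NormedAddTorsor V P]

theorem inner_vsub_orthogonalProjection_affineSpan_pair (a b p : P)
    [(affineSpan ℝ {a, b}).direction.HasOrthogonalProjection] :
    ⟪b -ᵥ a, (orthogonalProjection (affineSpan ℝ {a, b}) p : P) -ᵥ p⟫ = 0 := by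
  rw [← neg_vsub_eq_vsub_rev p, inner_neg_right, neg_eq_zero]
  exact Submodule.inner_right_of_mem_orthogonal
    (AffineSubspace.vsub_mem_direction (right_mem_affineSpan_pair ℝ a b)
      (left_mem_affineSpan_pair ℝ a b))
    (vsub_orthogonalProjection_mem_direction_orthogonal _ p)

theorem orthogonalProjection_affineSpan_pair_vsub_left_mem (a b p : P)
    [(affineSpan ℝ {a, b}).direction.HasOrthogonalProjection] :
    (orthogonalProjection (affineSpan ℝ {a, b}) p : P) -ᵥ a ∈ ℝ ∙ (b -ᵥ a) := by
  rw [← vectorSpan_pair_rev, ← direction_affineSpan]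
  exact AffineSubspace.vsub_mem_direction (orthogonalProjection_mem p)
    (left_mem_affineSpan_pair ℝ a b)

variable [Fact (finrank ℝ V = 2)] (o : Orientation ℝ V (Fin 2))

theorem areaForm_vsub_orthogonalProjection_affineSpan_pair (a b p : P)
    [(affineSpan ℝ {a, b}).direction.HasOrthogonalProjection] :
    o.areaForm (b -ᵥ a) ((orthogonalProjection (affineSpan ℝ {a, b}) p : P) -ᵥ p) =
      -o.areaForm (b -ᵥ a) (p -ᵥ a) := by
  obtain ⟨s, hs⟩ := Submodule.mem_span_singleton.mp
    (orthogonalProjection_affineSpan_pair_vsub_left_mem a b p)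
  rw [← vsub_sub_vsub_cancel_right _ p a, ← hs, map_sub, map_smul, o.areaForm_apply_self,
    smul_zero, zero_sub]

theorem oangle_orthogonalProjection_affineSpan_pair_eq_neg_pi_div_two (a b p : P)
    [(affineSpan ℝ {a, b}).direction.HasOrthogonalProjection]
    (hp : 0 < o.areaForm (b -ᵥ a) (p -ᵥ a)) :
    o.oangle (b -ᵥ a) ((orthogonalProjection (affineSpan ℝ {a, b}) p : P) -ᵥ p) =
      (-π / 2 : ℝ) :=
  o.oangle_eq_neg_pi_div_two_of_inner_eq_zero_of_areaForm_neg
    (inner_vsub_orthogonalProjection_affineSpan_pair a b p)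
    (by rw [areaForm_vsub_orthogonalProjection_affineSpan_pair]; linarith)

end EuclideanGeometry

theorem altitude_turn_general
    (a b c v : EuclideanSpace ℝ (Fin 2))
    (hv1 : 0 < stdOrientation.areaForm (b - a) (v - a))
    (hv2 : 0 < stdOrientation.areaForm (c - b) (v - b)) :
    (orthogonalProjection (affineSpan ℝ {a, b}) v : EuclideanSpace ℝ (Fin 2)) ≠ v ∧
    (orthogonalProjection (affineSpan ℝ {b, c}) v : EuclideanSpace ℝ (Fin 2)) ≠ v ∧
    stdOrientation.oangle
        ((orthogonalProjection (affineSpan ℝ {a, b}) v : EuclideanSpace ℝ (Fin 2)) - v)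
        ((orthogonalProjection (affineSpan ℝ {b, c}) v : EuclideanSpace ℝ (Fin 2)) - v) =
      stdOrientation.oangle (b - a) (c - b) := by
  have h₁ := oangle_orthogonalProjection_affineSpan_pair_eq_neg_pi_div_two stdOrientation a b v
      hv1
  have h₂ := oangle_orthogonalProjection_affineSpan_pair_eq_neg_pi_div_two stdOrientation b c v
      hv2
  simp only [vsub_eq_sub] at h₁ h₂
  have hf₁ := stdOrientation.right_ne_zero_of_oangle_eq_neg_pi_div_two h₁
  have hf₂ := stdOrientation.right_ne_zero_of_oangle_eq_neg_pi_div_two h₂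
  refine ⟨sub_ne_zero.mp hf₁, sub_ne_zero.mp hf₂, ?_⟩
  exact stdOrientation.oangle_eq_oangle_of_oangle_eq_oangle
    (stdOrientation.left_ne_zero_of_oangle_eq_neg_pi_div_two h₁) hf₁
    (stdOrientation.left_ne_zero_of_oangle_eq_neg_pi_div_two h₂) hf₂ (h₁.trans h₂.symm)

/-- Altitude-turn lemma: if `v` lies strictly to the left of the directed lines
through `a, b` and through `b, c`, and `f₁`, `f₂` are the feet of the altitudes
from `v` to those two lines, then `f₁ ≠ v`, `f₂ ≠ v`, and the oriented angle
from `f₁ - v` to `f₂ - v` equals the oriented turn angle from `b - a` to `c - b`. -/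
theorem altitude_turn
    (a b c v : EuclideanSpace ℝ (Fin 2))
    (hab : a ≠ b) (hbc : b ≠ c)
    (hv1 : 0 < stdOrientation.areaForm (b - a) (v - a))
    (hv2 : 0 < stdOrientation.areaForm (c - b) (v - b)) :
    (orthogonalProjection (affineSpan ℝ {a, b}) v : EuclideanSpace ℝ (Fin 2)) ≠ v ∧
    (orthogonalProjection (affineSpan ℝ {b, c}) v : EuclideanSpace ℝ (Fin 2)) ≠ v ∧
    stdOrientation.oangle
        ((orthogonalProjection (affineSpan ℝ {a, b}) v : EuclideanSpace ℝ (Fin 2)) - v)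
        ((orthogonalProjection (affineSpan ℝ {b, c}) v : EuclideanSpace ℝ (Fin 2)) - v) =
      stdOrientation.oangle (b - a) (c - b) :=
  altitude_turn_general a b c v hv1 hv2
end
end

section
/- Lemma (Width, Lemma 15.4): Let V be a finite set of points in ℝ² not all contained in one line, and let K = conv V. Then the width of K is achieved by an edge–vertex pair with the vertex projecting onto the edge: there exist a, b ∈ V with a ≠ b and the segment [a,b] contained in the frontier of K (an edge of K), a point c ∈ V, and a point q in the segment [a,b] with c − q perpendicular to b − a, such that dist(c, q) equals the width of K. -/
noncomputable section

open scoped RealInnerProductSpace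

/-- The width of a set `K` in the plane: the infimum over unit directions `u`
of the support width `sup_{x∈K} ⟪x,u⟫ − inf_{x∈K} ⟪x,u⟫`, i.e. the shortest
distance between two parallel supporting lines. -/
def width (K : Set (EuclideanSpace ℝ (Fin 2))) : ℝ :=
  ⨅ u : {u : EuclideanSpace ℝ (Fin 2) // ‖u‖ = 1},
    (sSup ((fun x => ⟪x, (u : EuclideanSpace ℝ (Fin 2))⟫) '' K) -
      sInf ((fun x => ⟪x, (u : EuclideanSpace ℝ (Fin 2))⟫) '' K))

/-!
Let `u` be a unit direction minimising the support width `w` of `K = conv V`, and `v ≠ 0`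
orthogonal to `u`. Pairs (bottom vertex `a`, top vertex `b`) realise `⟪b - a, u⟫ = w`, all other
vertex pairs stay strictly below `w`. If every such pair had `⟪b - a, v⟫ ≤ 0`, then for small
`ε > 0` all vertex differences would satisfy `⟪x - y, u + εv⟫ ≤ w`, while `‖u + εv‖ > 1`; the
normalised direction would have width `< w`. So some pair has `⟪a, v⟫ < ⟪b, v⟫`, and (using `-v`)
some pair `(a', b')` has `⟪b', v⟫ < ⟪a', v⟫`. Comparing `⟪a, v⟫` with `⟪b', v⟫`, either `b'` lies
over the bottom edge `[a, a']` or `a` lies under the top edge `[b', b]` in the `v`-coordinate,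
and in the plane the foot of the perpendicular from that vertex is on the edge, at distance `w`.
-/

open Module Set Filter Topology Metric

variable {E : Type*} [NormedAddCommGroup E] [InnerProductSpace ℝ E]

theorem isLinearMap_inner_left (u : E) : IsLinearMap ℝ (fun x => ⟪x, u⟫) :=
  ⟨fun x y => inner_add_left x y u, fun c x => real_inner_smul_left x u c⟩

def supportWidth (s : Set E) (u : E) : ℝ :=
  sSup ((fun x => ⟪x, u⟫) '' s) - sInf ((fun x => ⟪x, u⟫) '' s)

theorem supportWidth_eq_of_isMinOn_of_isMaxOn {s : Set E} {u a b : E} (ha : a ∈ s) (hb : b ∈ s)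
    (hmin : IsMinOn (fun x => ⟪x, u⟫) s a) (hmax : IsMaxOn (fun x => ⟪x, u⟫) s b) :
    supportWidth s u = ⟪b - a, u⟫ := by
  have hsup : IsGreatest ((fun x => ⟪x, u⟫) '' s) ⟪b, u⟫ :=
    ⟨mem_image_of_mem _ hb, forall_mem_image.2 hmax⟩
  have hinf : IsLeast ((fun x => ⟪x, u⟫) '' s) ⟪a, u⟫ :=
    ⟨mem_image_of_mem _ ha, forall_mem_image.2 hmin⟩
  rw [supportWidth, hsup.csSup_eq, hinf.csInf_eq, inner_sub_left]

theorem supportWidth_neg (s : Set E) (u : E) : supportWidth s (-u) = supportWidth s u := by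
  have : (fun x => ⟪x, -u⟫) '' s = -((fun x => ⟪x, u⟫) '' s) := by
    ext; simp [inner_neg_right, neg_eq_iff_eq_neg]
  rw [supportWidth, supportWidth, this, Real.sSup_neg, Real.sInf_neg]
  ring

section ConvexHull

variable {V : Finset E}

theorem exists_isMinOn_inner_convexHull (hne : V.Nonempty) (u : E) :
    ∃ a ∈ V, IsMinOn (fun x => ⟪x, u⟫) (convexHull ℝ (V : Set E)) a := by
  obtain ⟨a, ha, hmin⟩ := V.exists_min_image (fun x => ⟪x, u⟫) hne
  exact ⟨a, ha, convexHull_min hmin (convex_halfSpace_ge (isLinearMap_inner_left u) _)⟩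

theorem exists_isMaxOn_inner_convexHull (hne : V.Nonempty) (u : E) :
    ∃ b ∈ V, IsMaxOn (fun x => ⟪x, u⟫) (convexHull ℝ (V : Set E)) b := by
  obtain ⟨b, hb, hmax⟩ := V.exists_max_image (fun x => ⟪x, u⟫) hne
  exact ⟨b, hb, convexHull_min hmax (convex_halfSpace_le (isLinearMap_inner_left u) _)⟩

theorem inner_sub_le_supportWidth_convexHull {u x y : E} (hx : x ∈ convexHull ℝ (V : Set E))
    (hy : y ∈ convexHull ℝ (V : Set E)) :
    ⟪x - y, u⟫ ≤ supportWidth (convexHull ℝ (V : Set E)) u := by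
  have hne : V.Nonempty := Finset.coe_nonempty.1 (convexHull_nonempty_iff.1 ⟨x, hx⟩)
  obtain ⟨a, ha, hmin⟩ := exists_isMinOn_inner_convexHull hne u
  obtain ⟨b, hb, hmax⟩ := exists_isMaxOn_inner_convexHull hne u
  rw [supportWidth_eq_of_isMinOn_of_isMaxOn (subset_convexHull ℝ _ ha)
    (subset_convexHull ℝ _ hb) hmin hmax, inner_sub_left, inner_sub_left]
  linarith [isMinOn_iff.1 hmin y hy, isMaxOn_iff.1 hmax x hx]

theorem supportWidth_convexHull_eq_sup' (hne : V.Nonempty) (u : E) :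
    supportWidth (convexHull ℝ (V : Set E)) u =
      (V ×ˢ V).sup' (hne.product hne) fun p => ⟪p.1 - p.2, u⟫ := by
  obtain ⟨a, ha, hmin⟩ := exists_isMinOn_inner_convexHull hne u
  obtain ⟨b, hb, hmax⟩ := exists_isMaxOn_inner_convexHull hne u
  refine le_antisymm ?_ (Finset.sup'_le _ _ fun p hp => ?_)
  · rw [supportWidth_eq_of_isMinOn_of_isMaxOn (subset_convexHull ℝ _ ha)
      (subset_convexHull ℝ _ hb) hmin hmax]
    exact Finset.le_sup' (fun p : E × E => ⟪p.1 - p.2, u⟫) (Finset.mk_mem_product hb ha)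
  · obtain ⟨hp₁, hp₂⟩ := Finset.mem_product.1 hp
    exact inner_sub_le_supportWidth_convexHull (subset_convexHull ℝ _ hp₁)
      (subset_convexHull ℝ _ hp₂)

theorem continuous_supportWidth_convexHull (hne : V.Nonempty) :
    Continuous (supportWidth (convexHull ℝ (V : Set E))) := by
  rw [funext (supportWidth_convexHull_eq_sup' hne)]
  exact Continuous.finset_sup'_apply _ fun p _ => continuous_const.inner continuous_id

theorem exists_isMinOn_supportWidth_convexHull [Nontrivial E] [FiniteDimensional ℝ E]
    (hne : V.Nonempty) :
    ∃ u ∈ sphere (0 : E) 1, IsMinOn (supportWidth (convexHull ℝ (V : Set E))) (sphere 0 1) u :=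
  (isCompact_sphere 0 1).exists_isMinOn (NormedSpace.sphere_nonempty.2 zero_le_one)
    (continuous_supportWidth_convexHull hne).continuousOn

theorem exists_isMinOn_isMaxOn_inner_lt_of_isMinOn_supportWidth {u v : E}
    (hu : u ∈ sphere (0 : E) 1)
    (hmin : IsMinOn (supportWidth (convexHull ℝ (V : Set E))) (sphere 0 1) u)
    (hpos : 0 < supportWidth (convexHull ℝ (V : Set E)) u) (hv : v ≠ 0) (huv : ⟪u, v⟫ = 0) :
    ∃ a ∈ V, ∃ b ∈ V, IsMinOn (fun x => ⟪x, u⟫) (convexHull ℝ (V : Set E)) a ∧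
      IsMaxOn (fun x => ⟪x, u⟫) (convexHull ℝ (V : Set E)) b ∧ ⟪a, v⟫ < ⟪b, v⟫ := by
  set K := convexHull ℝ (V : Set E)
  set w := supportWidth K u
  have hne : V.Nonempty := by
    rw [Finset.nonempty_iff_ne_empty]
    rintro rfl
    simp [w, K, supportWidth] at hpos
  have mem (x : E) (hx : x ∈ V) : x ∈ K := subset_convexHull ℝ _ hx
  by_contra! h
  have htilt : ∀ᶠ ε in 𝓝[>] (0 : ℝ), ∀ p ∈ V ×ˢ V, ⟪p.1 - p.2, u + ε • v⟫ ≤ w := by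
    refine (eventually_all_finset _).2 fun p hp => ?_
    obtain ⟨hp₁, hp₂⟩ := Finset.mem_product.1 hp
    rcases (inner_sub_le_supportWidth_convexHull (u := u) (mem _ hp₁) (mem _ hp₂)).lt_or_eq
      with hlt | heq
    · have hcont :
          Tendsto (fun ε : ℝ => ⟪p.1 - p.2, u + ε • v⟫) (𝓝 0) (𝓝 ⟪p.1 - p.2, u⟫) := by
        have : Continuous fun ε : ℝ => ⟪p.1 - p.2, u + ε • v⟫ := by fun_prop
        simpa using this.tendsto 0
      exact nhdsWithin_le_nhds ((hcont.eventually (gt_mem_nhds hlt)).mono fun _ => le_of_lt)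
    · have hmin₂ : IsMinOn (fun x => ⟪x, u⟫) K p.2 := fun x hx => by
        have := inner_sub_le_supportWidth_convexHull (u := u) (mem _ hp₁) hx
        rw [← heq, inner_sub_left, inner_sub_left] at this
        exact sub_le_sub_iff_left _ |>.1 this
      have hmax₁ : IsMaxOn (fun x => ⟪x, u⟫) K p.1 := fun x hx => by
        have := inner_sub_le_supportWidth_convexHull (u := u) hx (mem _ hp₂)
        rw [← heq, inner_sub_left, inner_sub_left] at this
        exact sub_le_sub_iff_right _ |>.1 this
      have hv₁₂ := h p.2 hp₂ p.1 hp₁ hmin₂ hmax₁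
      filter_upwards [self_mem_nhdsWithin] with ε (hε : 0 < ε)
      rw [inner_add_right, real_inner_smul_right, heq, inner_sub_left]
      nlinarith
  obtain ⟨ε, hε_tilt, hε⟩ := (htilt.and self_mem_nhdsWithin).exists
  set N := ‖u + ε • v‖
  have hN : 1 < N := by
    have hεv : 0 < ‖ε • v‖ := norm_pos_iff.2 (smul_ne_zero (ne_of_gt hε) hv)
    have hsq := norm_add_sq_eq_norm_sq_add_norm_sq_real
      (by rw [real_inner_smul_right, huv, mul_zero] : ⟪u, ε • v⟫ = 0)
    rw [mem_sphere_zero_iff_norm.1 hu] at hsq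
    nlinarith [norm_nonneg (u + ε • v)]
  have hunit : N⁻¹ • (u + ε • v) ∈ sphere (0 : E) 1 := by
    rw [mem_sphere_zero_iff_norm, norm_smul, norm_inv, norm_norm, inv_mul_cancel₀ (by positivity)]
  have hle : supportWidth K (N⁻¹ • (u + ε • v)) ≤ N⁻¹ * w := by
    rw [supportWidth_convexHull_eq_sup' hne]
    refine Finset.sup'_le _ _ fun p hp => ?_
    rw [real_inner_smul_right]
    exact mul_le_mul_of_nonneg_left (hε_tilt p hp) (by positivity)
  have hge : w ≤ supportWidth K (N⁻¹ • (u + ε • v)) := hmin hunit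
  have : N⁻¹ < 1 := inv_lt_one_of_one_lt₀ hN
  nlinarith

end ConvexHull

theorem notMem_interior_of_isMinOn_inner {K : Set E} {u x : E} (hu : u ≠ 0)
    (hmin : IsMinOn (fun y => ⟪y, u⟫) K x) : x ∉ interior K := by
  intro hx
  have hloc : IsLocalMin (fun y => ⟪u, y⟫) x := by
    simpa only [real_inner_comm u] using hmin.isLocalMin (mem_interior_iff_mem_nhds.1 hx)
  have h0 := hloc.hasFDerivAt_eq_zero (innerSL ℝ u).hasFDerivAt
  exact hu (by simpa using congrArg (· u) h0)

theorem segment_subset_frontier_of_isMinOn_inner {K : Set E} (hK : Convex ℝ K) {u a b : E}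
    (hu : u ≠ 0) (ha : a ∈ K) (hb : b ∈ K) (hmin : IsMinOn (fun x => ⟪x, u⟫) K a)
    (hab : ⟪a, u⟫ = ⟪b, u⟫) : segment ℝ a b ⊆ frontier K := by
  intro x hx
  have hxa : ⟪x, u⟫ = ⟪a, u⟫ :=
    (convex_hyperplane (isLinearMap_inner_left u) ⟪a, u⟫).segment_subset rfl hab.symm hx
  refine ⟨subset_closure (hK.segment_subset ha hb hx), notMem_interior_of_isMinOn_inner hu ?_⟩
  exact fun y hy => hxa.trans_le (hmin hy)

section Plane

variable [Fact (finrank ℝ E = 2)]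

attribute [local instance] FiniteDimensional.of_fact_finrank_eq_two

theorem finrank_orthogonal_span_singleton_eq_one {u : E} (hu : u ≠ 0) :
    finrank ℝ (ℝ ∙ u)ᗮ = 1 :=
  haveI : Fact (finrank ℝ E = 1 + 1) := ⟨Fact.out⟩
  Submodule.finrank_orthogonal_span_singleton hu

theorem exists_ne_zero_inner_eq_zero {u : E} (hu : u ≠ 0) : ∃ v ≠ 0, ⟪u, v⟫ = 0 := by
  obtain ⟨⟨v, hv⟩, hv0⟩ :=
    finrank_pos_iff_exists_ne_zero.1 (finrank_orthogonal_span_singleton_eq_one hu).ge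
  exact ⟨v, by simpa using hv0, Submodule.mem_orthogonal_singleton_iff_inner_right.1 hv⟩

theorem exists_smul_eq_of_inner_eq_zero {u x y : E} (hu : u ≠ 0) (hx : ⟪x, u⟫ = 0)
    (hy : ⟪y, u⟫ = 0) (hy0 : y ≠ 0) : ∃ r : ℝ, r • y = x := by
  have hxW : x ∈ (ℝ ∙ u)ᗮ := Submodule.mem_orthogonal_singleton_iff_inner_left.2 hx
  have hyW : y ∈ (ℝ ∙ u)ᗮ := Submodule.mem_orthogonal_singleton_iff_inner_left.2 hy
  obtain ⟨r, hr⟩ := (finrank_eq_one_iff_of_nonzero' (⟨y, hyW⟩ : (ℝ ∙ u)ᗮ)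
    (by simpa using hy0)).1 (finrank_orthogonal_span_singleton_eq_one hu) ⟨x, hxW⟩
  exact ⟨r, congrArg Subtype.val hr⟩

theorem collinear_of_forall_inner_eq {s : Set E} {u : E} (hu : u ≠ 0)
    (h : ∀ x ∈ s, ∀ y ∈ s, ⟪x, u⟫ = ⟪y, u⟫) : Collinear ℝ s := by
  rcases s.eq_empty_or_nonempty with rfl | ⟨p₀, hp₀⟩
  · exact collinear_empty ℝ E
  obtain ⟨v, hv, huv⟩ := exists_ne_zero_inner_eq_zero hu
  refine (collinear_iff_of_mem hp₀).2 ⟨v, fun p hp => ?_⟩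
  obtain ⟨r, hr⟩ := exists_smul_eq_of_inner_eq_zero hu (x := p - p₀)
    (by rw [inner_sub_left, h p hp p₀ hp₀, sub_self]) (by rw [real_inner_comm, huv]) hv
  exact ⟨r, by rw [vadd_eq_add, hr, sub_add_cancel]⟩

theorem supportWidth_convexHull_pos {V : Finset E} (hV : ¬Collinear ℝ (V : Set E)) {u : E}
    (hu : u ≠ 0) : 0 < supportWidth (convexHull ℝ (V : Set E)) u := by
  by_contra! h
  refine hV (collinear_of_forall_inner_eq hu fun x hx y hy => ?_)
  have hxy := inner_sub_le_supportWidth_convexHull (u := u)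
    (subset_convexHull ℝ _ hx) (subset_convexHull ℝ _ hy)
  have hyx := inner_sub_le_supportWidth_convexHull (u := u)
    (subset_convexHull ℝ _ hy) (subset_convexHull ℝ _ hx)
  rw [inner_sub_left] at hxy hyx
  linarith

theorem mem_segment_of_inner_eq {u v a b q : E} (hu : u ≠ 0) (ha : ⟪a, u⟫ = ⟪q, u⟫)
    (hb : ⟪b, u⟫ = ⟪q, u⟫) (haq : ⟪a, v⟫ ≤ ⟪q, v⟫) (hqb : ⟪q, v⟫ ≤ ⟪b, v⟫)
    (hab : ⟪a, v⟫ < ⟪b, v⟫) : q ∈ segment ℝ a b := by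
  have hba : b - a ≠ 0 := sub_ne_zero.2 fun h => hab.ne (by rw [h])
  obtain ⟨r, hr⟩ := exists_smul_eq_of_inner_eq_zero hu (x := q - a)
    (by rw [inner_sub_left, ha, sub_self]) (by rw [inner_sub_left, ha, hb, sub_self]) hba
  have hrv : r * (⟪b, v⟫ - ⟪a, v⟫) = ⟪q, v⟫ - ⟪a, v⟫ := by
    rw [← inner_sub_left, ← inner_sub_left, ← real_inner_smul_left, hr]
  rw [segment_eq_image']
  refine ⟨r, ⟨?_, ?_⟩, show a + r • (b - a) = q by rw [hr, add_sub_cancel]⟩ <;> nlinarith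

theorem exists_perpendicular_foot_on_edge {K : Set E} (hK : Convex ℝ K) {u v a b c : E}
    (hu : ‖u‖ = 1) (huv : ⟪u, v⟫ = 0) (ha : a ∈ K) (hb : b ∈ K) (hc : c ∈ K)
    (hmin : IsMinOn (fun x => ⟪x, u⟫) K a) (hmax : IsMaxOn (fun x => ⟪x, u⟫) K c)
    (hab : ⟪a, u⟫ = ⟪b, u⟫) (hac : ⟪a, v⟫ ≤ ⟪c, v⟫) (hcb : ⟪c, v⟫ < ⟪b, v⟫) :
    a ≠ b ∧ segment ℝ a b ⊆ frontier K ∧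
      ∃ q ∈ segment ℝ a b, ⟪c - q, b - a⟫ = 0 ∧ dist c q = supportWidth K u := by
  have hu0 : u ≠ 0 := norm_ne_zero_iff.1 (by rw [hu]; exact one_ne_zero)
  have huu : ⟪u, u⟫ = 1 := by rw [real_inner_self_eq_norm_sq, hu, one_pow]
  set q := c - ⟪c - a, u⟫ • u
  have hcq : c - q = ⟪c - a, u⟫ • u := sub_sub_cancel _ _
  have hqu : ⟪q, u⟫ = ⟪a, u⟫ := by
    simp only [q, inner_sub_left, real_inner_smul_left, huu]; ring
  have hqv : ⟪q, v⟫ = ⟪c, v⟫ := by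
    simp only [q, inner_sub_left, real_inner_smul_left, huv]; ring
  have hab_v : ⟪a, v⟫ < ⟪b, v⟫ := hac.trans_lt hcb
  refine ⟨fun h => hab_v.ne (by rw [h]),
    segment_subset_frontier_of_isMinOn_inner hK hu0 ha hb hmin hab, q,
    mem_segment_of_inner_eq hu0 hqu.symm (hab.symm.trans hqu.symm) (hqv ▸ hac) (hqv ▸ hcb.le)
      hab_v, ?_, ?_⟩
  · rw [hcq, real_inner_smul_left, inner_sub_right, real_inner_comm a, real_inner_comm b, hab,
      sub_self, mul_zero]
  · rw [dist_eq_norm, hcq, norm_smul, hu, mul_one,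
      supportWidth_eq_of_isMinOn_of_isMaxOn ha hc hmin hmax, Real.norm_of_nonneg]
    rw [inner_sub_left, sub_nonneg]
    exact hmin hc

end Plane

theorem width_eq_supportWidth_of_isMinOn {K : Set (EuclideanSpace ℝ (Fin 2))}
    {u : EuclideanSpace ℝ (Fin 2)} (hu : u ∈ sphere 0 1)
    (hmin : IsMinOn (supportWidth K) (sphere 0 1) u) : width K = supportWidth K u := by
  have : Nonempty {u : EuclideanSpace ℝ (Fin 2) // ‖u‖ = 1} :=
    ⟨⟨u, mem_sphere_zero_iff_norm.1 hu⟩⟩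
  have hbdd : BddBelow (range fun u' : {u : EuclideanSpace ℝ (Fin 2) // ‖u‖ = 1} =>
      supportWidth K u') :=
    ⟨_, forall_mem_range.2 fun u' => hmin (mem_sphere_zero_iff_norm.2 u'.2)⟩
  exact le_antisymm (ciInf_le hbdd ⟨u, mem_sphere_zero_iff_norm.1 hu⟩)
    (le_ciInf fun u' => hmin (mem_sphere_zero_iff_norm.2 u'.2))

/-- Lemma (Width): the width of a convex polygon `K = conv V` is achieved by an
edge–vertex pair, with the vertex `c` projecting perpendicularly onto a point `q`
of the edge `[a,b]`. -/
theorem width_edge_vertex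
    (V : Finset (EuclideanSpace ℝ (Fin 2)))
    (hV : ¬ Collinear ℝ (V : Set (EuclideanSpace ℝ (Fin 2)))) :
    ∃ a ∈ V, ∃ b ∈ V, ∃ c ∈ V, ∃ q ∈ segment ℝ a b,
      a ≠ b ∧
      segment ℝ a b ⊆ frontier (convexHull ℝ (V : Set (EuclideanSpace ℝ (Fin 2)))) ∧
      ⟪c - q, b - a⟫ = 0 ∧
      dist c q = width (convexHull ℝ (V : Set (EuclideanSpace ℝ (Fin 2)))) := by
  have : Fact (finrank ℝ (EuclideanSpace ℝ (Fin 2)) = 2) := ⟨finrank_euclideanSpace_fin⟩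
  set K := convexHull ℝ (V : Set (EuclideanSpace ℝ (Fin 2)))
  have mem (x) (hx : x ∈ V) : x ∈ K := subset_convexHull ℝ _ hx
  have hne : V.Nonempty :=
    Finset.nonempty_iff_ne_empty.2 fun h => hV (by simp [h, collinear_empty])
  obtain ⟨u, hu, hmin⟩ := exists_isMinOn_supportWidth_convexHull hne
  have hu1 : ‖u‖ = 1 := mem_sphere_zero_iff_norm.1 hu
  have hu0 : u ≠ 0 := ne_zero_of_mem_unit_sphere ⟨u, hu⟩
  have hpos := supportWidth_convexHull_pos hV hu0
  obtain ⟨v, hv, huv⟩ := exists_ne_zero_inner_eq_zero hu0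
  obtain ⟨a, ha, b, hb, ha_min, hb_max, hab⟩ :=
    exists_isMinOn_isMaxOn_inner_lt_of_isMinOn_supportWidth hu hmin hpos hv huv
  obtain ⟨a', ha', b', hb', ha'_min, hb'_max, hab'⟩ :=
    exists_isMinOn_isMaxOn_inner_lt_of_isMinOn_supportWidth hu hmin hpos (neg_ne_zero.2 hv)
      (by rw [inner_neg_right, huv, neg_zero])
  rw [inner_neg_right, inner_neg_right, neg_lt_neg_iff] at hab'
  rw [width_eq_supportWidth_of_isMinOn hu hmin]
  have haa' : ⟪a, u⟫ = ⟪a', u⟫ := le_antisymm (ha_min (mem a' ha')) (ha'_min (mem a ha))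
  have hb'b : ⟪b', u⟫ = ⟪b, u⟫ := le_antisymm (hb_max (mem b' hb')) (hb'_max (mem b hb))
  rcases le_or_gt ⟪a, v⟫ ⟪b', v⟫ with h | h
  · obtain ⟨hne, hfr, q, hq, hperp, hdist⟩ :=
      exists_perpendicular_foot_on_edge (convex_convexHull ℝ _) hu1 huv
        (mem a ha) (mem a' ha') (mem b' hb') ha_min hb'_max haa' h hab'
    exact ⟨a, ha, a', ha', b', hb', q, hq, hne, hfr, hperp, hdist⟩
  · obtain ⟨hne, hfr, q, hq, hperp, hdist⟩ :=
      exists_perpendicular_foot_on_edge (convex_convexHull ℝ _) (u := -u)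
        (by rwa [norm_neg]) (by rw [inner_neg_left, huv, neg_zero])
        (mem b' hb') (mem b hb) (mem a ha)
        (by simpa only [inner_neg_right] using hb'_max.neg)
        (by simpa only [inner_neg_right] using ha_min.neg)
        (by rw [inner_neg_right, inner_neg_right, hb'b]) h.le hab
    exact ⟨b', hb', b, hb, a, ha, q, hq, hne, hfr, hperp, hdist.trans (supportWidth_neg K u)⟩
end
end

section
/- Hull-edge replacement invariant (induction claim (2) in the proof of Theorem 11.1): Let V be a finite set of points in ℝ², no three of which are collinear, let a, b ∈ V be distinct with the segment [a,b] contained in the frontier of conv V (an edge of the hull), let m be a point of the segment [a,b], and let V' = (V \ {a,b}) ∪ {m}. Then the segment [a,b] intersects conv V' exactly in the single point m: [a,b] ∩ conv V' = {m}. -/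
/-!
When `V` has a vertex `p` other than `a` and `b`, the triangle `p a b` spans the plane, so `conv V`
has nonempty interior and there is a supporting line at the midpoint of the edge `[a,b]`: a nonzero
functional `f` whose maximum on `conv V` is attained along all of `[a,b]`. By general position no
other vertex lies on that line, so `f` is strictly below its maximum on `V \ {a, b}`, and the only
point of `conv V'` on the line is `m`. If `V = {a, b}` then `conv V' = {m}`.
-/

local notation "E2" => EuclideanSpace ℝ (Fin 2)

open Set Module

section Plane

variable {k V P : Type*} [Field k] [AddCommGroup V] [Module k V] [AddTorsor V P]

theorem affineSpan_eq_top_of_not_collinear (hV : finrank k V = 2) {s : Set P}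
    (hs : ¬Collinear k s) : affineSpan k s = ⊤ := by
  have : FiniteDimensional k V := finite_of_finrank_eq_succ hV
  have hne : s.Nonempty := nonempty_iff_ne_empty.2 fun h => hs (h ▸ collinear_empty k P)
  rw [AffineSubspace.affineSpan_eq_top_iff_vectorSpan_eq_top_of_nonempty k V P hne]
  rw [collinear_iff_finrank_le_one, not_le] at hs
  exact Submodule.eq_top_of_finrank_eq <| le_antisymm (Submodule.finrank_le _) (hV ▸ hs)

theorem collinear_of_forall_eq_of_ne_zero {W : Type*} [AddCommGroup W] [Module k W]
    (hV : finrank k V = 2) {f : V →ₗ[k] W} (hf : f ≠ 0) {s : Set V} {w : W}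
    (hs : ∀ y ∈ s, f y = w) : Collinear k s := by
  by_contra hcol
  have hker : vectorSpan k s ≤ LinearMap.ker f := by
    refine Submodule.span_le.2 ?_
    rintro _ ⟨u, hu, y, hy, rfl⟩
    simp [hs u hu, hs y hy]
  rw [AffineSubspace.vectorSpan_eq_top_of_affineSpan_eq_top k V V
    (affineSpan_eq_top_of_not_collinear hV hcol), top_le_iff, LinearMap.ker_eq_top] at hker
  exact hf hker

end Plane

section Support

variable {E : Type*} [AddCommGroup E] [Module ℝ E]

theorem eq_of_mem_convexHull_insert_of_lt (f : E →ₗ[ℝ] ℝ) {S : Set E} {m x : E} {r : ℝ}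
    (hS : ∀ y ∈ S, f y < r) (hm : f m ≤ r) (hx : x ∈ convexHull ℝ (insert m S))
    (hfx : f x = r) : x = m := by
  obtain rfl | hne := S.eq_empty_or_nonempty
  · simpa using hx
  rw [convexHull_insert hne, mem_convexJoin] at hx
  obtain ⟨m', rfl, y, hy, u, v, hu, hv, huv, rfl⟩ := hx
  have hfy : f y < r := convexHull_min hS (convex_halfSpace_lt f.isLinear r) hy
  have hv0 : v = 0 := by
    by_contra hv0
    have hfx' : f (u • m' + v • y) = u * f m' + v * f y := by simp
    have hvpos : 0 < v := lt_of_le_of_ne hv (Ne.symm hv0)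
    have hr : u * r + v * r = r := by rw [← add_mul, huv, one_mul]
    linarith [mul_le_mul_of_nonneg_left hm hu, mul_lt_mul_of_pos_left hfy hvpos]
  obtain rfl : u = 1 := by linarith
  simp [hv0]

variable [TopologicalSpace E] [IsTopologicalAddGroup E] [ContinuousSMul ℝ E]

theorem exists_supporting_functional_of_midpoint_notMem_interior {K : Set E} (hK : Convex ℝ K)
    (hKint : (interior K).Nonempty) {a b : E} (ha : a ∈ K) (hb : b ∈ K)
    (hmid : midpoint ℝ a b ∉ interior K) :
    ∃ f : StrongDual ℝ E, f ≠ 0 ∧ (∀ y ∈ K, f y ≤ f a) ∧ ∀ x ∈ segment ℝ a b, f x = f a := by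
  obtain ⟨f, hf0, hfK⟩ := geometric_hahn_banach_of_nonempty_interior_point hK hmid hKint
  have hmid_eq : f (midpoint ℝ a b) = (f a + f b) / 2 := by
    rw [midpoint_eq_smul_add, map_smul, map_add, smul_eq_mul, invOf_eq_inv]
    ring
  have hfa := hfK a ha
  have hfb := hfK b hb
  have hab : f b = f a := by linarith
  refine ⟨f, hf0, fun y hy => by linarith [hfK y hy], fun x hx => ?_⟩
  have : f x ∈ segment ℝ (f a) (f b) :=
    image_segment ℝ (f : E →ₗ[ℝ] ℝ).toAffineMap a b ▸ mem_image_of_mem f hx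
  rwa [hab, segment_same, mem_singleton_iff] at this

end Support

theorem hull_edge_replacement_general
    (V : Set E2)
    (hgp : ∀ p ∈ V, ∀ q ∈ V, ∀ r ∈ V, p ≠ q → p ≠ r → q ≠ r →
      ¬ Collinear ℝ ({p, q, r} : Set E2))
    (a b m : E2) (ha : a ∈ V) (hb : b ∈ V) (hab : a ≠ b)
    (hedge : segment ℝ a b ⊆ frontier (convexHull ℝ V))
    (hm : m ∈ segment ℝ a b) :
    segment ℝ a b ∩ convexHull ℝ ((V \ {a, b}) ∪ {m}) = {m} := by
  refine eq_singleton_iff_unique_mem.2 ⟨⟨hm, subset_convexHull ℝ _ (by simp)⟩, ?_⟩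
  rintro x ⟨hx, hxV⟩
  rw [union_singleton] at hxV
  have hnc : ∀ q ∈ V \ {a, b}, ¬Collinear ℝ ({q, a, b} : Set E2) := by
    rintro q ⟨hqV, hqab⟩
    simp only [mem_insert_iff, mem_singleton_iff, not_or] at hqab
    exact hgp q hqV a ha b hb hqab.1 hqab.2 hab
  obtain hS | ⟨p, hp⟩ := (V \ {a, b}).eq_empty_or_nonempty
  · simpa [hS] using hxV
  have hspan : affineSpan ℝ V = ⊤ := by
    rw [← top_le_iff, ← affineSpan_eq_top_of_not_collinear finrank_euclideanSpace_fin (hnc p hp)]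
    exact affineSpan_mono ℝ (by simp [insert_subset_iff, hp.1, ha, hb])
  obtain ⟨f, hf0, hfV, hfab⟩ := exists_supporting_functional_of_midpoint_notMem_interior
    (convex_convexHull ℝ V) (interior_convexHull_nonempty_iff_affineSpan_eq_top.2 hspan)
    (subset_convexHull ℝ V ha) (subset_convexHull ℝ V hb) (hedge (midpoint_mem_segment a b)).2
  have hlt : ∀ q ∈ V \ {a, b}, f q < f a := by
    intro q hq
    refine (hfV q (subset_convexHull ℝ V hq.1)).lt_of_ne fun hqa => hnc q hq ?_
    have hf0' : (f : E2 →ₗ[ℝ] ℝ) ≠ 0 := fun h => hf0 (ContinuousLinearMap.coe_injective h)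
    refine collinear_of_forall_eq_of_ne_zero finrank_euclideanSpace_fin hf0' (w := f a) ?_
    simpa [hqa] using hfab b (right_mem_segment ℝ a b)
  exact eq_of_mem_convexHull_insert_of_lt f hlt (hfab m hm).le hxV (hfab x hx)

/-- Hull-edge replacement invariant: if `[a,b]` is an edge of the convex hull of
a finite set `V` in general position, `m` is a point of `[a,b]`, and
`V' = (V \ {a,b}) ∪ {m}`, then the segment `[a,b]` meets `conv V'` exactly in
the single point `m`. -/
theorem hull_edge_replacement
    (V : Set E2) (hVfin : V.Finite)
    (hgp : ∀ p ∈ V, ∀ q ∈ V, ∀ r ∈ V, p ≠ q → p ≠ r → q ≠ r →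
      ¬ Collinear ℝ ({p, q, r} : Set E2))
    (a b m : E2) (ha : a ∈ V) (hb : b ∈ V) (hab : a ≠ b)
    (hedge : segment ℝ a b ⊆ frontier (convexHull ℝ V))
    (hm : m ∈ segment ℝ a b) :
    segment ℝ a b ∩ convexHull ℝ ((V \ {a, b}) ∪ {m}) = {m} :=
  hull_edge_replacement_general V hgp a b m ha hb hab hedge hm
end
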